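/- arXiv:2503.02506 — 3 statements merged into one kernel-verified Lean document; each statement's English description precedes it below -/
import Mathlib

section
/- Let S be a finite set of m real numbers that is (ε,δ)-stable with respect to μ, i.e., for every subset S' ⊆ S with |S'| ≥ (1-ε)m, the mean of S' is within δ of μ and the average of (x-μ)² over S' is at most δ²/ε. Let S₁ be another finite set with |S ∩ S₁| = (1-ε₁)|S₁|, |S ∩ S₁| ≥ (1-ε)|S|, and sample variance of S₁ at most ξ. Then |mean(S₁) - μ| ≤ δ + sqrt(ξ ε₁/(1-ε₁)). -/
/-- Mean of a finite set of reals. -/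
noncomputable def fmean (S : Finset ℝ) : ℝ := (∑ x ∈ S, x) / S.card

/-- Average squared deviation of a finite set of reals about a point `μ`. -/
noncomputable def fvarAbout (S : Finset ℝ) (μ : ℝ) : ℝ := (∑ x ∈ S, (x - μ)^2) / S.card

/-- Sample variance of a finite set of reals. -/
noncomputable def fvar (S : Finset ℝ) : ℝ := fvarAbout S (fmean S)

lemma aux_low (a d s : ℝ) (ha : 0 < a) (h : (a * d)^2 ≤ a * s) : a * d^2 ≤ s := by
  nlinarith

lemma aux_key (n d ξ ε₁ : ℝ) (hn : 0 < n) (h1e : 0 < 1 - ε₁)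
    (h1 : ((1 - ε₁) * n * d)^2 ≤ ε₁ * n * (n * ξ - (1 - ε₁) * n * d^2)) :
    d^2 ≤ ξ * ε₁ / (1 - ε₁) := by
  rw [le_div_iff₀ h1e]
  nlinarith [mul_pos hn hn, sq_nonneg d, sq_nonneg n]

/-- Lemma A.1: if `S` is `(ε,δ)`-stable with respect to `μ`, `|S ∩ S₁| = (1-ε₁)|S₁|`,
`|S ∩ S₁| ≥ (1-ε)|S|` and the sample variance of `S₁` is at most `ξ`, then
`|mean(S₁) - μ| ≤ δ + sqrt(ξ ε₁ / (1-ε₁))`. -/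
theorem stmt0 (S S₁ : Finset ℝ) (μ δ ε ε₁ ξ : ℝ)
    (hε : 0 < ε) (hε' : ε < 1/2) (hε₁ : 0 < ε₁) (hε₁' : ε₁ < 1)
    (hδ : 0 < δ) (hξ : 0 ≤ ξ)
    (hstable : ∀ S' ⊆ S, (1 - ε) * S.card ≤ S'.card →
      |fmean S' - μ| ≤ δ ∧ fvarAbout S' μ ≤ δ^2 / ε)
    (hcard₁ : ((S ∩ S₁).card : ℝ) = (1 - ε₁) * S₁.card)
    (hcard₂ : (1 - ε) * S.card ≤ ((S ∩ S₁).card : ℝ))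
    (hvar : fvar S₁ ≤ ξ) :
    |fmean S₁ - μ| ≤ δ + Real.sqrt (ξ * ε₁ / (1 - ε₁)) := by
  obtain ⟨hmT, -⟩ := hstable (S ∩ S₁) Finset.inter_subset_left hcard₂
  rcases eq_or_ne S₁.card 0 with h0 | h0
  · have hS₁ : S₁ = ∅ := Finset.card_eq_zero.mp h0
    have hT0 : S ∩ S₁ = ∅ := by simp [hS₁]
    rw [hT0] at hmT
    have heq : fmean S₁ = fmean (∅ : Finset ℝ) := by rw [hS₁]
    calc |fmean S₁ - μ| = |fmean (∅ : Finset ℝ) - μ| := by rw [heq]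
      _ ≤ δ := hmT
      _ ≤ δ + Real.sqrt (ξ * ε₁ / (1 - ε₁)) :=
        le_add_of_nonneg_right (Real.sqrt_nonneg _)
  · -- main case
    have hε₁pos : 0 < 1 - ε₁ := by linarith
    have hnpos : (0:ℝ) < S₁.card := by
      exact_mod_cast Nat.pos_of_ne_zero h0
    have hnTpos : (0:ℝ) < (S ∩ S₁).card := by rw [hcard₁]; positivity
    have hcardR : ((S₁ \ S).card : ℝ) = (S₁.card : ℝ) - ((S ∩ S₁).card : ℝ) := by
      have h := Finset.card_inter_add_card_sdiff S₁ S
      rw [Finset.inter_comm] at h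
      have := congrArg (Nat.cast (R := ℝ)) h
      push_cast at this
      linarith
    have hsumS₁ : ∑ x ∈ S₁, x = (S₁.card : ℝ) * fmean S₁ := by
      rw [fmean]; field_simp
    have hsum0 : ∑ x ∈ S₁, (x - fmean S₁) = 0 := by
      rw [Finset.sum_sub_distrib, Finset.sum_const, nsmul_eq_mul, hsumS₁]; ring
    have hsplit : ∑ x ∈ S ∩ S₁, (x - fmean S₁) + ∑ x ∈ S₁ \ S, (x - fmean S₁)
        = ∑ x ∈ S₁, (x - fmean S₁) := by
      rw [Finset.inter_comm]
      exact Finset.sum_inter_add_sum_sdiff S₁ S _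
    have hsumTm : ((S ∩ S₁).card : ℝ) * fmean (S ∩ S₁) = ∑ x ∈ S ∩ S₁, x := by
      rw [fmean]; field_simp
    have hsumT : ∑ x ∈ S ∩ S₁, (x - fmean S₁)
        = ((S ∩ S₁).card : ℝ) * (fmean (S ∩ S₁) - fmean S₁) := by
      rw [Finset.sum_sub_distrib, Finset.sum_const, nsmul_eq_mul, mul_sub, hsumTm]
    have hsumR : ∑ x ∈ S₁ \ S, (x - fmean S₁)
        = -(((S ∩ S₁).card : ℝ) * (fmean (S ∩ S₁) - fmean S₁)) := by
      rw [hsumT, hsum0] at hsplit; linarith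
    have hsplitSq : ∑ x ∈ S ∩ S₁, (x - fmean S₁)^2 + ∑ x ∈ S₁ \ S, (x - fmean S₁)^2
        = ∑ x ∈ S₁, (x - fmean S₁)^2 := by
      rw [Finset.inter_comm]
      exact Finset.sum_inter_add_sum_sdiff S₁ S _
    have hvarSum : ∑ x ∈ S₁, (x - fmean S₁)^2 ≤ (S₁.card : ℝ) * ξ := by
      have h := hvar
      rw [fvar, fvarAbout, div_le_iff₀ hnpos] at h
      linarith
    have hCS_T : (((S ∩ S₁).card : ℝ) * (fmean (S ∩ S₁) - fmean S₁))^2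
        ≤ ((S ∩ S₁).card : ℝ) * ∑ x ∈ S ∩ S₁, (x - fmean S₁)^2 := by
      rw [← hsumT]
      exact sq_sum_le_card_mul_sum_sq
    have hCS_R : (((S ∩ S₁).card : ℝ) * (fmean (S ∩ S₁) - fmean S₁))^2
        ≤ ((S₁ \ S).card : ℝ) * ∑ x ∈ S₁ \ S, (x - fmean S₁)^2 := by
      have h : (∑ x ∈ S₁ \ S, (x - fmean S₁))^2
          ≤ ((S₁ \ S).card : ℝ) * ∑ x ∈ S₁ \ S, (x - fmean S₁)^2 :=
        sq_sum_le_card_mul_sum_sq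
      rw [hsumR] at h
      simpa using h
    have hnT : ((S ∩ S₁).card : ℝ) = (1 - ε₁) * (S₁.card : ℝ) := hcard₁
    have hnR : ((S₁ \ S).card : ℝ) = ε₁ * (S₁.card : ℝ) := by rw [hcardR, hnT]; ring
    have hTlow : (1 - ε₁) * (S₁.card : ℝ) * (fmean (S ∩ S₁) - fmean S₁)^2
        ≤ ∑ x ∈ S ∩ S₁, (x - fmean S₁)^2 := by
      rw [hnT] at hCS_T
      exact aux_low _ _ _ (by positivity) hCS_T
    have hRsq : ∑ x ∈ S₁ \ S, (x - fmean S₁)^2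
        ≤ (S₁.card : ℝ) * ξ - (1 - ε₁) * (S₁.card : ℝ) * (fmean (S ∩ S₁) - fmean S₁)^2 := by
      linarith
    have h1 : ((1 - ε₁) * (S₁.card : ℝ) * (fmean (S ∩ S₁) - fmean S₁))^2
        ≤ ε₁ * (S₁.card : ℝ) * ((S₁.card : ℝ) * ξ
            - (1 - ε₁) * (S₁.card : ℝ) * (fmean (S ∩ S₁) - fmean S₁)^2) := by
      calc ((1 - ε₁) * (S₁.card : ℝ) * (fmean (S ∩ S₁) - fmean S₁))^2
          ≤ ((S₁ \ S).card : ℝ) * ∑ x ∈ S₁ \ S, (x - fmean S₁)^2 := by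
            rw [← hnT]; exact hCS_R
        _ ≤ ε₁ * (S₁.card : ℝ) * ((S₁.card : ℝ) * ξ
            - (1 - ε₁) * (S₁.card : ℝ) * (fmean (S ∩ S₁) - fmean S₁)^2) := by
            rw [hnR]
            exact mul_le_mul_of_nonneg_left hRsq (by positivity)
    have hkey : (fmean (S ∩ S₁) - fmean S₁)^2 ≤ ξ * ε₁ / (1 - ε₁) :=
      aux_key _ _ _ _ hnpos hε₁pos h1
    have hdle : |fmean (S ∩ S₁) - fmean S₁| ≤ Real.sqrt (ξ * ε₁ / (1 - ε₁)) :=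
      Real.abs_le_sqrt hkey
    calc |fmean S₁ - μ| = |(fmean (S ∩ S₁) - μ) - (fmean (S ∩ S₁) - fmean S₁)| := by
          ring_nf
      _ ≤ |fmean (S ∩ S₁) - μ| + |fmean (S ∩ S₁) - fmean S₁| := abs_sub _ _
      _ ≤ δ + Real.sqrt (ξ * ε₁ / (1 - ε₁)) := add_le_add hmT hdle
end

section
/- One-step refinement error bound (Theorem 1 skeleton, deterministic form): let L_Q: Δ_K → ℝ satisfy L_Q(q) - L_Q(q*) ≥ λ‖q - q*‖₂² on Δ_K for some λ > 0 and q* ∈ Δ_K. Let E_Q(q₁,q₂) = L_Q(q₁) - L_Q(q₂), and suppose Ê: Δ_K × Δ_K → ℝ satisfies |Ê(q₁,q₂) - E_Q(q₁,q₂)| ≤ C·r·max(‖q₁-q*‖₂ + ‖q₂-q*‖₂, r) for all q₁,q₂ ∈ Δ_K. If q' ∈ Δ_K satisfies ‖q'-q*‖₂ ≤ r' and q̂ minimizes Ê(·, q') over Δ_K, then ‖q̂ - q*‖₂ ≤ C'·max(r, sqrt(r·r')) for a constant C' depending only on C and λ. -/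
lemma quad_bound (C lam d m : ℝ) (hC : 0 < C) (hlam : 0 < lam)
    (hd : 0 ≤ d) (hm : 0 ≤ m) (h : lam * d^2 ≤ C * m * d + 4 * C * m^2) :
    d ≤ (C + Real.sqrt (C^2 + 16 * lam * C)) / (2 * lam) * m := by
  set s := Real.sqrt (C^2 + 16 * lam * C) with hs_def
  have hs0 : 0 ≤ s := Real.sqrt_nonneg _
  have hs2 : s^2 = C^2 + 16 * lam * C := Real.sq_sqrt (by nlinarith)
  have hsC : C ≤ s := by nlinarith
  rcases eq_or_lt_of_le hd with hd0 | hd0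
  · rw [← hd0]
    positivity
  · -- (2λd - (C+s)m)(2λd + (s-C)m) = 4λ(λd² - Cmd - 4Cm²) ≤ 0
    have key : 2 * lam * d ≤ (C + s) * m := by
      nlinarith [mul_nonneg hs0 hm, mul_pos hlam hd0, mul_nonneg hm hd,
        mul_nonneg (mul_nonneg hs0 hm) hd, sq_nonneg (2*lam*d - (C+s)*m)]
    rw [div_mul_eq_mul_div, le_div_iff₀ (by linarith)]
    linarith

/-- One-step refinement error bound (deterministic form of Theorem 1): for any `C > 0`
and `λ > 0` there is a constant `C' > 0`, depending only on `C` and `λ`, such that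
whenever `L_Q(q) - L_Q(q*) ≥ λ‖q-q*‖₂²` on the simplex, the excess-risk estimate `Ê`
satisfies `|Ê(q₁,q₂) - (L_Q(q₁) - L_Q(q₂))| ≤ C r max(‖q₁-q*‖+‖q₂-q*‖, r)`, the rough
estimate `q'` satisfies `‖q'-q*‖ ≤ r' ≤ 1`, and `q̂` minimizes `Ê(·,q')` over the
simplex, it holds that `‖q̂ - q*‖₂ ≤ C' max(r, sqrt(r r'))`. -/
theorem stmt13 (C lam : ℝ) (hC : 0 < C) (hlam : 0 < lam) :
    ∃ C' : ℝ, 0 < C' ∧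
      ∀ (K : ℕ) (LQ : (Fin K → ℝ) → ℝ) (Ehat : (Fin K → ℝ) → (Fin K → ℝ) → ℝ)
        (qstar q' qhat : Fin K → ℝ) (r r' : ℝ),
        0 ≤ r → 0 ≤ r' → r' ≤ 1 →
        qstar ∈ stdSimplex ℝ (Fin K) →
        (∀ q ∈ stdSimplex ℝ (Fin K),
          lam * (∑ i, (q i - qstar i)^2) ≤ LQ q - LQ qstar) →
        (∀ q₁ ∈ stdSimplex ℝ (Fin K), ∀ q₂ ∈ stdSimplex ℝ (Fin K),
          |Ehat q₁ q₂ - (LQ q₁ - LQ q₂)| ≤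
            C * r * max (Real.sqrt (∑ i, (q₁ i - qstar i)^2)
              + Real.sqrt (∑ i, (q₂ i - qstar i)^2)) r) →
        q' ∈ stdSimplex ℝ (Fin K) →
        Real.sqrt (∑ i, (q' i - qstar i)^2) ≤ r' →
        qhat ∈ stdSimplex ℝ (Fin K) →
        (∀ q ∈ stdSimplex ℝ (Fin K), Ehat qhat q' ≤ Ehat q q') →
        Real.sqrt (∑ i, (qhat i - qstar i)^2) ≤ C' * max r (Real.sqrt (r * r')) := by
  refine ⟨(C + Real.sqrt (C^2 + 16 * lam * C)) / (2 * lam), ?_, ?_⟩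
  · have : 0 ≤ Real.sqrt (C^2 + 16 * lam * C) := Real.sqrt_nonneg _
    positivity
  intro K LQ Ehat qstar q' qhat r r' hr hr' hr'1 hqstar hstrong hbound hq'mem hq' hqhat hmin
  set d := Real.sqrt (∑ i, (qhat i - qstar i)^2) with hd_def
  set e := Real.sqrt (∑ i, (q' i - qstar i)^2) with he_def
  have hSd : (0:ℝ) ≤ ∑ i, (qhat i - qstar i)^2 :=
    Finset.sum_nonneg fun i _ => sq_nonneg _
  have hd0 : 0 ≤ d := Real.sqrt_nonneg _
  have he0 : 0 ≤ e := Real.sqrt_nonneg _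
  have hd2 : d^2 = ∑ i, (qhat i - qstar i)^2 := Real.sq_sqrt hSd
  have hstar0 : Real.sqrt (∑ i, (qstar i - qstar i)^2) = 0 := by
    simp
  -- error bounds
  have h1 := hbound qhat hqhat q' hq'mem
  have h2 := hbound qstar hqstar q' hq'mem
  rw [hstar0] at h2
  have hlow := hstrong qhat hqhat
  have hminw := hmin qstar hqstar
  -- abs bounds
  have h1l := (abs_le.mp h1).1
  have h1r := (abs_le.mp h1).2
  have h2l := (abs_le.mp h2).1
  have h2r := (abs_le.mp h2).2
  -- max bounds
  have hmax1 : max (d + e) r ≤ d + e + r := max_le (by linarith) (by linarith)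
  have hmax2 : max (0 + e) r ≤ e + r := max_le (by linarith) (by linarith)
  set m := max r (Real.sqrt (r * r')) with hm_def
  have hm0 : 0 ≤ m := le_trans hr (le_max_left _ _)
  have hrm : r ≤ m := le_max_left _ _
  have hrr'm : r * r' ≤ m^2 := by
    have : Real.sqrt (r * r') ≤ m := le_max_right _ _
    nlinarith [Real.sq_sqrt (mul_nonneg hr hr'), Real.sqrt_nonneg (r * r')]
  have her' : e ≤ r' := hq'
  -- chain inequality
  have hCr0 : 0 ≤ C * r := mul_nonneg hC.le hr
  have hchain : lam * d^2 ≤ C * r * (d + e + r) + C * r * (e + r) := by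
    have b1 : C * r * max (d + e) r ≤ C * r * (d + e + r) :=
      mul_le_mul_of_nonneg_left hmax1 hCr0
    have b2 : C * r * max (0 + e) r ≤ C * r * (e + r) :=
      mul_le_mul_of_nonneg_left hmax2 hCr0
    rw [hd2]
    linarith
  have hquad : lam * d^2 ≤ C * m * d + 4 * C * m^2 := by
    nlinarith [mul_le_mul_of_nonneg_right hrm hd0, mul_le_mul_of_nonneg_left her' hCr0,
      mul_nonneg hCr0 hd0, mul_le_mul_of_nonneg_left hrm hC.le, sq_nonneg m]
  exact quad_bound C lam d m hC hlam hd0 hm0 hquad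
end

section
/- Geometric convergence of multi-step refinement (Corollary 1 skeleton): suppose a sequence {a_t}_{t≥0} of nonnegative reals satisfies a₀ ≤ r' and a_t ≤ C·max(r, sqrt(r·a_{t-1})) for all t ≥ 1, where 0 < r ≤ r' and C ≥ 1. Then a_t ≤ C^{2} r^{1 - 2^{-t}} (r')^{2^{-t}} for all t ≥ 0, and in particular limsup_t a_t ≤ C² r. -/
open Filter

/-- Geometric convergence of multi-step refinement (Corollary 1 skeleton): if
`a₀ ≤ r'` and `a_t ≤ C max(r, sqrt(r a_{t-1}))` with `0 < r ≤ r'` and `C ≥ 1`, then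
`a_t ≤ C² r^{1-2^{-t}} (r')^{2^{-t}}` for all `t`, and `limsup_t a_t ≤ C² r`. -/
theorem stmt14 (a : ℕ → ℝ) (r r' C : ℝ)
    (ha : ∀ t, 0 ≤ a t) (hr : 0 < r) (hrr' : r ≤ r') (hC : 1 ≤ C)
    (h0 : a 0 ≤ r')
    (hrec : ∀ t : ℕ, 1 ≤ t → a t ≤ C * max r (Real.sqrt (r * a (t - 1)))) :
    (∀ t : ℕ, a t ≤ C^2 * r ^ ((1 : ℝ) - (2 : ℝ)^(-(t : ℝ)))
        * r' ^ ((2 : ℝ)^(-(t : ℝ)))) ∧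
      limsup a atTop ≤ C^2 * r := by
  have hr' : 0 < r' := lt_of_lt_of_le hr hrr'
  have hCpos : 0 < C := lt_of_lt_of_le one_pos hC
  set e : ℕ → ℝ := fun t => (2 : ℝ) ^ (-(t : ℝ)) with he
  have hepos : ∀ t, 0 < e t := fun t => Real.rpow_pos_of_pos two_pos _
  have hestep : ∀ t : ℕ, e (t + 1) = e t / 2 := by
    intro t
    simp only [he]
    rw [div_eq_mul_inv, ← Real.rpow_neg_one (2:ℝ), ← Real.rpow_add two_pos]
    push_cast
    ring_nf
  have key : ∀ t, a t ≤ C ^ 2 * r ^ (1 - e t) * r' ^ (e t) := by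
    intro t
    induction t with
    | zero =>
      have : e 0 = 1 := by simp [he]
      rw [this]
      simp only [sub_self, Real.rpow_zero, Real.rpow_one, mul_one]
      have h1 : (1:ℝ) ≤ C ^ 2 := by nlinarith
      calc a 0 ≤ r' := h0
        _ ≤ C ^ 2 * r' := le_mul_of_one_le_left hr'.le h1
    | succ n ih =>
      have hrec' := hrec (n + 1) (by omega)
      simp only [Nat.add_sub_cancel] at hrec'
      set B : ℝ := C ^ 2 * r ^ (1 - e (n + 1)) * r' ^ (e (n + 1)) with hB
      have hBpos : 0 < B := by positivity
      have h1 : C * r ≤ B := by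
        have hr_le : r ≤ r ^ (1 - e (n + 1)) * r' ^ (e (n + 1)) := by
          have heq : r ^ (1 - e (n + 1)) * r ^ (e (n + 1)) = r := by
            rw [← Real.rpow_add hr, sub_add_cancel, Real.rpow_one]
          calc r = r ^ (1 - e (n + 1)) * r ^ (e (n + 1)) := heq.symm
            _ ≤ r ^ (1 - e (n + 1)) * r' ^ (e (n + 1)) :=
              mul_le_mul_of_nonneg_left
                (Real.rpow_le_rpow hr.le hrr' (hepos _).le)
                (Real.rpow_pos_of_pos hr _).le
        calc C * r ≤ C ^ 2 * r := by
              nlinarith [mul_nonneg (mul_nonneg (sub_nonneg.mpr hC) hCpos.le) hr.le]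
          _ ≤ C ^ 2 * (r ^ (1 - e (n + 1)) * r' ^ (e (n + 1))) :=
              mul_le_mul_of_nonneg_left hr_le (by positivity)
          _ = B := by rw [hB]; ring
      have h2 : C * Real.sqrt (r * a n) ≤ B := by
        have hsq : C * Real.sqrt (r * a n) = Real.sqrt (C ^ 2 * (r * a n)) := by
          have h := Real.sqrt_mul (show (0:ℝ) ≤ C ^ 2 by positivity) (r * a n)
          rw [Real.sqrt_sq hCpos.le] at h
          exact h.symm
        rw [hsq]
        have hB2 : B ^ 2 = C ^ 4 * r ^ (2 - e n) * r' ^ (e n) := by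
          have h2e : 2 * e (n + 1) = e n := by rw [hestep]; ring
          rw [hB]
          rw [mul_pow, mul_pow, ← Real.rpow_natCast (r ^ (1 - e (n+1))) 2,
            ← Real.rpow_natCast (r' ^ (e (n+1))) 2,
            ← Real.rpow_mul hr.le, ← Real.rpow_mul hr'.le]
          push_cast
          rw [show (1 - e (n+1)) * 2 = 2 - 2 * e (n+1) by ring,
            show e (n+1) * 2 = 2 * e (n+1) by ring, h2e]
          ring
        have hle : C ^ 2 * (r * a n) ≤ B ^ 2 := by
          rw [hB2]
          have : C ^ 2 * (r * a n) ≤ C ^ 2 * (r * (C ^ 2 * r ^ (1 - e n) * r' ^ (e n))) := by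
            gcongr
          refine this.trans (le_of_eq ?_)
          have : r * r ^ (1 - e n) = r ^ (2 - e n) := by
            nth_rewrite 1 [← Real.rpow_one r]
            rw [← Real.rpow_add hr]
            congr 1
            ring
          rw [show r * (C ^ 2 * r ^ (1 - e n) * r' ^ (e n))
              = (r * r ^ (1 - e n)) * (C ^ 2 * r' ^ (e n)) by ring, this]
          ring
        calc Real.sqrt (C ^ 2 * (r * a n)) ≤ Real.sqrt (B ^ 2) :=
              Real.sqrt_le_sqrt hle
          _ = B := Real.sqrt_sq hBpos.le
      calc a (n + 1) ≤ C * max r (Real.sqrt (r * a n)) := hrec'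
        _ = max (C * r) (C * Real.sqrt (r * a n)) := by
            rw [mul_max_of_nonneg _ _ hCpos.le]
        _ ≤ B := max_le h1 h2
  refine ⟨key, ?_⟩
  -- limsup part
  have hetend : Tendsto e atTop (nhds 0) := by
    have : e = fun t : ℕ => ((1:ℝ)/2) ^ t := by
      funext t
      rw [he]
      simp only [Real.rpow_neg (by norm_num : (0:ℝ) ≤ 2), Real.rpow_natCast]
      rw [one_div, inv_pow]
    rw [this]
    exact tendsto_pow_atTop_nhds_zero_of_lt_one (by norm_num) (by norm_num)
  have hbtend : Tendsto (fun t => C ^ 2 * r ^ (1 - e t) * r' ^ (e t)) atTop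
      (nhds (C ^ 2 * r)) := by
    have h1 : Tendsto (fun t => r ^ (1 - e t)) atTop (nhds (r ^ (1:ℝ))) := by
      refine Filter.Tendsto.rpow tendsto_const_nhds ?_ (Or.inl hr.ne')
      simpa using (tendsto_const_nhds.sub hetend)
    have h2 : Tendsto (fun t => r' ^ (e t)) atTop (nhds (r' ^ (0:ℝ))) :=
      Filter.Tendsto.rpow tendsto_const_nhds hetend (Or.inl hr'.ne')
    rw [Real.rpow_one] at h1
    rw [Real.rpow_zero] at h2
    have hc : Tendsto (fun _ : ℕ => C ^ 2) atTop (nhds (C ^ 2)) := tendsto_const_nhds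
    have := (hc.mul h1).mul h2
    simpa using this
  have hlim : limsup (fun t => C ^ 2 * r ^ (1 - e t) * r' ^ (e t)) atTop
      = C ^ 2 * r := hbtend.limsup_eq
  rw [← hlim]
  refine Filter.limsup_le_limsup (Filter.Eventually.of_forall key) ?_ ?_
  · exact Filter.isCoboundedUnder_le_of_eventually_le atTop
      (Filter.Eventually.of_forall (fun t => ha t))
  · exact hbtend.isBoundedUnder_le
end
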